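/- arXiv:1510.07202 — 2 statements merged into one kernel-verified Lean document; each statement's English description precedes it below -/
import Mathlib

section
/- If μ is a computable, continuous (atomless) Borel probability measure on Cantor space 2^ω, then there is a computable order f such that g_μ(n) ≤ f(n) < g_μ(n+2) for every n, where g_μ is the granularity function of μ. -/
open Filter MeasureTheory

/-- The length-`n` initial segment of an infinite binary sequence, as a list. -/
def strTake (X : ℕ → Bool) (n : ℕ) : List Bool := (List.range n).map X

/-- The basic open cylinder of a binary string in Cantor space. -/
def cyl (σ : List Bool) : Set (ℕ → Bool) := {X | strTake X σ.length = σ}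

/-- A measure on Cantor space is computable if the values of the cylinders can be
uniformly approximated to any precision `2⁻ⁱ` by a computable function
(with dyadic rational values `f(σ,i)/2ⁱ`). -/
def ComputableMeasure (μ : Measure (ℕ → Bool)) : Prop :=
  ∃ f : List Bool × ℕ → ℕ, Computable f ∧
    ∀ σ i, |(μ (cyl σ)).toReal - (f (σ, i) : ℝ) / 2 ^ i| ≤ (2 : ℝ)⁻¹ ^ i

/-- A `μ`-Martin-Löf test: a uniformly c.e. sequence of sets of strings generating
open sets whose `μ`-measures are bounded by `2⁻ⁱ`. -/
def MLTest (μ : Measure (ℕ → Bool)) (V : ℕ → Set (List Bool)) : Prop :=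
  REPred (fun p : ℕ × List Bool => p.2 ∈ V p.1) ∧
    ∀ i, μ (⋃ σ ∈ V i, cyl σ) ≤ 2⁻¹ ^ i

/-- `X` is `μ`-Martin-Löf random if it passes every `μ`-Martin-Löf test. -/
def MLRandom (μ : Measure (ℕ → Bool)) (X : ℕ → Bool) : Prop :=
  ∀ V, MLTest μ V → ∃ i, X ∉ ⋃ σ ∈ V i, cyl σ

/-- The granularity of a (continuous) measure: the least `ℓ` such that every
string of length `ℓ` has cylinder of measure `< 2⁻ⁿ`. -/
noncomputable def granularity (μ : Measure (ℕ → Bool)) (n : ℕ) : ℕ :=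
  sInf {l | ∀ σ : List Bool, σ.length = l → μ (cyl σ) < 2⁻¹ ^ n}

/-- A computable order (per context: non-decreasing, unbounded, computable). -/
def ComputableOrder (f : ℕ → ℕ) : Prop :=
  Computable f ∧ Monotone f ∧ (∀ m, ∃ n, m ≤ f n)

/-!
Approximating `μ [σ]` to precision `2⁻ⁿ⁻³` lets one decide, uniformly in `n` and `σ`, one of
`μ [σ] < 2⁻ⁿ` or `2⁻ⁿ⁻¹ < μ [σ]` (when both hold, either answer may come out). By continuity of
`μ` and compactness of Cantor space, there is a least length `h n` at which every string is
certified to satisfy the first alternative, and an unbounded search finds it. Then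
`g_μ n ≤ h n`, and `h n < g_μ (n + 2)`: if `h n > 0`, some string of length `h n - 1` has measure
above `2⁻ⁿ⁻¹`, so one of its two children has measure at least `2⁻ⁿ⁻²`. Since `g_μ` is monotone,
the running maximum of `h` still satisfies both bounds and is a computable order.
-/

open scoped Topology ENNReal

section Cylinders

@[simp]
lemma strTake_length (X : ℕ → Bool) (n : ℕ) : (strTake X n).length = n := by
  simp [strTake]

lemma mem_cyl_iff {X : ℕ → Bool} {σ : List Bool} :
    X ∈ cyl σ ↔ ∀ i (hi : i < σ.length), X i = σ[i] := by
  simp [cyl, List.ext_get_iff, strTake]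

lemma mem_cyl_strTake (X : ℕ → Bool) (n : ℕ) : X ∈ cyl (strTake X n) := by
  simp [mem_cyl_iff, strTake]

lemma cyl_anti {σ τ : List Bool} (h : σ <+: τ) : cyl τ ⊆ cyl σ := by
  intro X hX
  rw [mem_cyl_iff] at hX ⊢
  intro i hi
  rw [hX i (hi.trans_le h.length_le), h.getElem hi]

lemma strTake_prefix (X : ℕ → Bool) {m n : ℕ} (h : m ≤ n) : strTake X m <+: strTake X n := by
  simpa [strTake, List.take_range, ← List.map_take, h] using
    List.take_prefix m (strTake X n)

lemma cyl_nonempty (σ : List Bool) : (cyl σ).Nonempty :=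
  ⟨fun i => σ.getD i false, mem_cyl_iff.2 fun i hi => by simp [hi]⟩

@[simp]
lemma cyl_nil : cyl [] = Set.univ := by
  ext X; simp [mem_cyl_iff]

lemma isOpen_cyl (σ : List Bool) : IsOpen (cyl σ) := by
  have : cyl σ = ⋂ i : Fin σ.length, (fun X : ℕ → Bool => X i) ⁻¹' {σ[i]} := by
    ext X; simp [mem_cyl_iff, Fin.forall_iff]
  rw [this]
  exact isOpen_iInter_of_finite fun i =>
    (isOpen_discrete ({σ[i]} : Set Bool)).preimage (continuous_apply (i : ℕ))

lemma measurableSet_cyl (σ : List Bool) : MeasurableSet (cyl σ) :=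
  (isOpen_cyl σ).measurableSet

lemma iInter_cyl_strTake (X : ℕ → Bool) : ⋂ n, cyl (strTake X n) = {X} := by
  refine Set.Subset.antisymm (fun Y hY => ?_) (by simp [mem_cyl_strTake])
  funext i
  have hY' : ∀ j ≤ i, Y j = X j := by
    simpa [mem_cyl_iff, strTake] using Set.mem_iInter.1 hY (i + 1)
  exact hY' i le_rfl

lemma iUnion_cyl_length (n : ℕ) : ⋃ σ : {σ : List Bool // σ.length = n}, cyl σ = Set.univ :=
  Set.eq_univ_of_forall fun X => Set.mem_iUnion.2 ⟨⟨strTake X n, by simp⟩, mem_cyl_strTake X n⟩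

lemma cyl_subset_union_append (σ : List Bool) :
    cyl σ ⊆ cyl (σ ++ [false]) ∪ cyl (σ ++ [true]) := by
  intro X hX
  have hσ : X ∈ cyl (σ ++ [X σ.length]) := by
    rw [mem_cyl_iff] at hX ⊢
    intro i hi
    rcases (Nat.lt_succ_iff_lt_or_eq.1 (by simpa using hi)) with hi | rfl
    · simp [hX i hi, List.getElem_append_left hi]
    · simp
  cases h : X σ.length <;> simp_all

end Cylinders

section Granularity

variable {μ : Measure (ℕ → Bool)}

lemma exists_measure_cyl_ne_zero [NeZero μ] (n : ℕ) :
    ∃ σ : List Bool, σ.length = n ∧ μ (cyl σ) ≠ 0 := by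
  by_contra! h
  apply NeZero.ne μ
  rw [← Measure.measure_univ_eq_zero, ← iUnion_cyl_length n]
  exact measure_iUnion_null fun σ => h σ σ.2

variable [IsFiniteMeasure μ] (hcont : ∀ X : ℕ → Bool, μ {X} = 0)
include hcont

lemma tendsto_measure_cyl_strTake (X : ℕ → Bool) :
    Tendsto (fun n => μ (cyl (strTake X n))) atTop (𝓝 0) := by
  rw [← hcont X, ← iInter_cyl_strTake]
  exact tendsto_measure_iInter_atTop (fun n => (measurableSet_cyl _).nullMeasurableSet)
    (fun m n hmn => cyl_anti (strTake_prefix X hmn)) ⟨0, measure_ne_top μ _⟩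

lemma exists_length_forall_measure_cyl_lt {ε : ℝ≥0∞} (hε : 0 < ε) :
    ∃ l, ∀ σ : List Bool, σ.length = l → μ (cyl σ) < ε := by
  have hX : ∀ X : ℕ → Bool, ∃ n, μ (cyl (strTake X n)) < ε := fun X =>
    ((tendsto_measure_cyl_strTake hcont X).eventually_lt_const hε).exists
  choose N hN using hX
  obtain ⟨t, ht⟩ := isCompact_univ.elim_finite_subcover (fun X => cyl (strTake X (N X)))
    (fun X => isOpen_cyl _) fun X _ => Set.mem_iUnion.2 ⟨X, mem_cyl_strTake X (N X)⟩
  refine ⟨t.sup N, fun σ hσ => ?_⟩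
  obtain ⟨Y, hY⟩ := cyl_nonempty σ
  obtain ⟨X, hXt, hYX⟩ : ∃ X ∈ t, Y ∈ cyl (strTake X (N X)) := by
    simpa using ht (Set.mem_univ Y)
  have hpre : strTake X (N X) <+: σ := by
    have hYX' : strTake Y (N X) = strTake X (N X) := by simpa [cyl] using hYX
    have hY' : strTake Y σ.length = σ := hY
    rw [← hYX', ← hY']
    exact strTake_prefix Y (hσ ▸ Finset.le_sup hXt)
  exact (measure_mono (cyl_anti hpre)).trans_lt (hN X)

lemma granularity_le_iff {n l : ℕ} :
    granularity μ n ≤ l ↔ ∀ σ : List Bool, σ.length = l → μ (cyl σ) < 2⁻¹ ^ n := by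
  refine ⟨fun h σ hσ => ?_, fun h => Nat.sInf_le h⟩
  have hgran : granularity μ n ∈ {l | ∀ σ : List Bool, σ.length = l → μ (cyl σ) < 2⁻¹ ^ n} :=
    Nat.sInf_mem (exists_length_forall_measure_cyl_lt hcont (ENNReal.pow_pos (by simp) n))
  calc μ (cyl σ) ≤ μ (cyl (σ.take (granularity μ n))) :=
        measure_mono (cyl_anti (List.take_prefix _ σ))
    _ < 2⁻¹ ^ n := hgran _ (by simp [hσ, h])

lemma length_lt_granularity {n : ℕ} {σ : List Bool} (h : 2⁻¹ ^ n ≤ μ (cyl σ)) :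
    σ.length < granularity μ n := by
  by_contra! hle
  exact (granularity_le_iff hcont |>.1 hle σ rfl).not_ge h

lemma granularity_pos [IsProbabilityMeasure μ] (n : ℕ) : 0 < granularity μ n :=
  length_lt_granularity (σ := []) hcont (by simp [pow_le_one'])

lemma granularity_mono : Monotone (granularity μ) := fun m n hmn =>
  (granularity_le_iff hcont).2 fun σ hσ =>
    ((granularity_le_iff hcont).1 le_rfl σ hσ).trans_le (pow_le_pow_right_of_le_one' (by simp) hmn)

lemma exists_le_granularity [NeZero μ] (m : ℕ) : ∃ n, m ≤ granularity μ n := by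
  obtain ⟨σ, rfl, hσ⟩ := exists_measure_cyl_ne_zero (μ := μ) m
  obtain ⟨n, hn⟩ := ENNReal.exists_inv_two_pow_lt hσ
  exact ⟨n, (length_lt_granularity hcont hn.le).le⟩

lemma length_add_one_lt_granularity {n : ℕ} {σ : List Bool} (h : 2⁻¹ ^ n < μ (cyl σ)) :
    σ.length + 1 < granularity μ (n + 1) := by
  by_contra! hle
  have hchild := (granularity_le_iff hcont).1 hle
  refine h.not_ge ?_
  calc μ (cyl σ) ≤ μ (cyl (σ ++ [false]) ∪ cyl (σ ++ [true])) :=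
        measure_mono (cyl_subset_union_append σ)
    _ ≤ μ (cyl (σ ++ [false])) + μ (cyl (σ ++ [true])) := measure_union_le _ _
    _ ≤ 2⁻¹ ^ (n + 1) + 2⁻¹ ^ (n + 1) :=
        add_le_add (hchild _ (by simp)).le (hchild _ (by simp)).le
    _ = 2⁻¹ ^ n := by rw [pow_succ, ← mul_add, ENNReal.inv_two_add_inv_two, mul_one]

end Granularity

section Computability

variable {α β : Type*} [Primcodable α] [Primcodable β]

lemma computablePred_forall_mem [Inhabited β] {L : α → List β} {p : α → β → Bool}
    (hL : Computable L) (hp : Computable₂ p) :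
    ComputablePred fun a => ∀ b ∈ L a, p a b = true := by
  let check : α → ℕ → Bool := fun a k =>
    Nat.rec true (fun i acc => acc && p a ((L a).getD i default)) k
  have hcheck : ∀ a k, check a k = true ↔ ∀ i < k, p a ((L a).getD i default) = true := by
    intro a k
    induction k with
    | zero => simp [check]
    | succ k ih =>
      simp only [check, Bool.and_eq_true] at ih ⊢
      rw [ih, Nat.forall_lt_succ_right]
  have hcomp : Computable fun a => check a (L a).length :=
    Computable.nat_rec (Computable.list_length.comp hL) (Computable.const true)
      (Primrec.and.to_comp.comp (Computable.snd.comp Computable.snd)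
        (hp.comp Computable.fst ((Primrec.list_getD default).to_comp.comp
          (hL.comp Computable.fst) (Computable.fst.comp Computable.snd)))).to₂
  refine ComputablePred.computable_iff.2 ⟨_, hcomp, funext fun a => propext ?_⟩
  rw [hcheck, List.forall_mem_iff_getElem]
  exact forall₂_congr fun i hi => by simp [hi]

def binaryStrings : ℕ → List (List Bool)
  | 0 => [[]]
  | l + 1 => (binaryStrings l).flatMap fun σ => [false :: σ, true :: σ]

@[simp]
lemma mem_binaryStrings {l : ℕ} {σ : List Bool} : σ ∈ binaryStrings l ↔ σ.length = l := by
  induction l generalizing σ with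
  | zero => simp [binaryStrings]
  | succ l ih =>
    cases σ with
    | nil => simp [binaryStrings]
    | cons b τ => cases b <;> simp [binaryStrings, ih]

lemma primrec_binaryStrings : Primrec binaryStrings := by
  have hstep : Primrec₂ fun (_ : ℕ) (L : List (List Bool)) =>
      L.flatMap fun σ => [false :: σ, true :: σ] :=
    (Primrec.list_flatMap Primrec.snd <|
      (Primrec.list_cons.comp (Primrec.list_cons.comp (Primrec.const false) Primrec.snd) <|
        Primrec.list_cons.comp (Primrec.list_cons.comp (Primrec.const true) Primrec.snd)
          (Primrec.const [])).to₂).to₂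
  refine (Primrec.nat_rec₁ [[]] hstep).of_eq fun l => ?_
  induction l with
  | zero => rfl
  | succ l ih => simp [binaryStrings, ← ih]

lemma computablePred_forall_length {p : α → List Bool → Bool} (hp : Computable₂ p) :
    ComputablePred fun q : α × ℕ => ∀ σ : List Bool, σ.length = q.2 → p q.1 σ = true :=
  (computablePred_forall_mem (primrec_binaryStrings.to_comp.comp Computable.snd)
    (hp.comp (Computable.fst.comp Computable.fst) Computable.snd).to₂).of_eq fun q => by simp

lemma Computable.partialSups {f : ℕ → ℕ} (hf : Computable f) : Computable (partialSups f) := by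
  refine (Computable.nat_rec Computable.id (Computable.const (f 0))
    (Primrec.nat_max.to_comp.comp (Computable.snd.comp Computable.snd)
      (hf.comp (Computable.succ.comp (Computable.fst.comp Computable.snd)))).to₂).of_eq fun n => ?_
  induction n with
  | zero => simp
  | succ n ih => exact (congrArg (max · (f (n + 1))) ih).trans (partialSups_succ f n).symm

end Computability

lemma exists_computableOrder_between {g h : ℕ → ℕ} {k : ℕ} (hg : Monotone g)
    (hg_unbdd : ∀ m, ∃ n, m ≤ g n) (hh : Computable h) (hlow : ∀ n, g n ≤ h n)
    (hup : ∀ n, h n < g (n + k)) :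
    ∃ f : ℕ → ℕ, ComputableOrder f ∧ ∀ n, g n ≤ f n ∧ f n < g (n + k) := by
  have hlow' : ∀ n, g n ≤ partialSups h n := fun n => (hlow n).trans (le_partialSups h n)
  refine ⟨partialSups h, ⟨hh.partialSups, (partialSups h).monotone, fun m => ?_⟩, fun n => ?_⟩
  · obtain ⟨n, hn⟩ := hg_unbdd m
    exact ⟨n, hn.trans (hlow' n)⟩
  · obtain ⟨j, hjn, hj⟩ := exists_partialSups_eq h n
    exact ⟨hlow' n, hj ▸ (hup j).trans_le (hg (by omega))⟩

section Approximation

variable {r : ℝ} {g n : ℕ}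

lemma lt_inv_two_pow_of_abs_sub_le (hr : |r - g / 2 ^ (n + 3)| ≤ 2⁻¹ ^ (n + 3)) (hg : g ≤ 5) :
    r < 2⁻¹ ^ n := by
  have hu : (0 : ℝ) < 2⁻¹ ^ n := by positivity
  have hg' : (g : ℝ) ≤ 5 := by exact_mod_cast hg
  rw [div_eq_mul_inv, ← inv_pow, pow_add] at hr
  nlinarith [(abs_le.1 hr).2]

lemma inv_two_pow_lt_of_abs_sub_le (hr : |r - g / 2 ^ (n + 3)| ≤ 2⁻¹ ^ (n + 3)) (hg : 6 ≤ g) :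
    2⁻¹ ^ (n + 1) < r := by
  have hu : (0 : ℝ) < 2⁻¹ ^ n := by positivity
  have hg' : (6 : ℝ) ≤ g := by exact_mod_cast hg
  rw [div_eq_mul_inv, ← inv_pow, pow_add] at hr
  rw [pow_succ]
  nlinarith [(abs_le.1 hr).1]

end Approximation

structure IsCylinderTest (μ : Measure (ℕ → Bool)) (t : ℕ → List Bool → Bool) : Prop where
  measure_lt_of_true {n : ℕ} {σ : List Bool} : t n σ = true → μ (cyl σ) < 2⁻¹ ^ n
  lt_measure_of_false {n : ℕ} {σ : List Bool} : t n σ = false → 2⁻¹ ^ (n + 1) < μ (cyl σ)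

lemma ComputableMeasure.exists_isCylinderTest {μ : Measure (ℕ → Bool)} [IsFiniteMeasure μ]
    (hμ : ComputableMeasure μ) : ∃ t, Computable₂ t ∧ IsCylinderTest μ t := by
  obtain ⟨q, hq, happrox⟩ := hμ
  -- With precision `2⁻ⁿ⁻³`, the threshold `6 · 2⁻ⁿ⁻³` separates `μ [σ] < 2⁻ⁿ` from `2⁻ⁿ⁻¹ < μ [σ]`.
  refine ⟨fun n σ => decide (q (σ, n + 3) ≤ 5), ?_, fun {n σ} h => ?_, fun {n σ} h => ?_⟩
  · exact (Primrec.nat_le.comp Primrec.id (Primrec.const 5)).decide.to_comp.comp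
      (hq.comp (Computable.pair Computable.snd (Computable.succ.comp (Computable.succ.comp
        (Computable.succ.comp Computable.fst)))))
  · rw [← ENNReal.toReal_lt_toReal (measure_ne_top μ _) (by simp)]
    simpa using lt_inv_two_pow_of_abs_sub_le (happrox σ (n + 3)) (by simpa using h)
  · rw [← ENNReal.toReal_lt_toReal (by simp) (measure_ne_top μ _)]
    simpa using inv_two_pow_lt_of_abs_sub_le (happrox σ (n + 3)) (by simp at h; omega)

noncomputable def testLevel (t : ℕ → List Bool → Bool) (n : ℕ) : ℕ :=
  sInf {l | ∀ σ : List Bool, σ.length = l → t n σ = true}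

section TestLevel

variable {μ : Measure (ℕ → Bool)} [IsFiniteMeasure μ] (hcont : ∀ X : ℕ → Bool, μ {X} = 0)
  {t : ℕ → List Bool → Bool} (ht : IsCylinderTest μ t)
include hcont ht

lemma exists_length_forall_test (n : ℕ) : ∃ l, ∀ σ : List Bool, σ.length = l → t n σ = true := by
  obtain ⟨l, hl⟩ := exists_length_forall_measure_cyl_lt hcont
    (ε := 2⁻¹ ^ (n + 1)) (ENNReal.pow_pos (by simp) _)
  exact ⟨l, fun σ hσ => by_contra fun h =>
    (hl σ hσ).not_gt (ht.lt_measure_of_false (Bool.eq_false_iff.2 h))⟩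

lemma testLevel_spec (n : ℕ) : ∀ σ : List Bool, σ.length = testLevel t n → t n σ = true :=
  Nat.sInf_mem (exists_length_forall_test hcont ht n)

lemma granularity_le_testLevel (n : ℕ) : granularity μ n ≤ testLevel t n :=
  (granularity_le_iff hcont).2 fun σ hσ => ht.measure_lt_of_true (testLevel_spec hcont ht n σ hσ)

lemma testLevel_lt_granularity [IsProbabilityMeasure μ] (n : ℕ) :
    testLevel t n < granularity μ (n + 2) := by
  cases hl : testLevel t n with
  | zero => exact granularity_pos hcont _
  | succ m =>
    obtain ⟨σ, rfl, hσ⟩ : ∃ σ : List Bool, σ.length = m ∧ t n σ = false := by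
      simpa using Nat.notMem_of_lt_sInf (hl ▸ Nat.lt_succ_self m : m < testLevel t n)
    exact length_add_one_lt_granularity hcont (ht.lt_measure_of_false hσ)

lemma computable_testLevel (htc : Computable₂ t) : Computable (testLevel t) := by
  classical
  exact (Computable.find (computablePred_forall_length htc)
    (exists_length_forall_test hcont ht)).of_eq fun n =>
      le_antisymm (Nat.find_min' _ (testLevel_spec hcont ht n)) (Nat.sInf_le (Nat.find_spec _))

end TestLevel

theorem stmt10 (μ : Measure (ℕ → Bool)) (hprob : IsProbabilityMeasure μ)
    (hcomp : ComputableMeasure μ) (hcont : ∀ X : ℕ → Bool, μ {X} = 0) :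
    ∃ f : ℕ → ℕ, ComputableOrder f ∧
      ∀ n, granularity μ n ≤ f n ∧ f n < granularity μ (n + 2) := by
  obtain ⟨t, htc, ht⟩ := hcomp.exists_isCylinderTest
  exact exists_computableOrder_between (granularity_mono hcont) (exists_le_granularity hcont)
    (computable_testLevel hcont ht htc) (granularity_le_testLevel hcont ht)
    (testLevel_lt_granularity hcont ht)
end

section
/- If g : ℕ → ℕ is a strictly increasing function that is not dominated by any computable function, and h and ℓ are computable orders, then there exist infinitely many n such that ℓ(g(n)) < h(g(n+1)). -/
open Filter

/-!
Suppose instead that `h (g (n + 1)) ≤ l (g n)` for all large `n`. Let `F m` be the least `k` with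
`l m < h k`; it is computable by unbounded search and monotone because `l` is. Monotonicity of `h`
then forces `g (n + 1) < F (g n)`, so from some `N` on `g` is bounded by the computable sequence of
iterates `F^[n - N] (g N)`, contradicting that `g` escapes every computable function.
-/

theorem Computable.nat_iterate {α β : Type*} [Primcodable α] [Primcodable β] {f : α → ℕ}
    {g : α → β} {h : α → β → β} (hf : Computable f) (hg : Computable g)
    (hh : Computable₂ h) :
    Computable fun a => (h a)^[f a] (g a) :=
  (nat_rec hf hg (hh.comp fst (snd.comp snd)).to₂).of_eq fun a => by
    induction f a <;> simp [*, -Function.iterate_succ, Function.iterate_succ']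

theorem exists_computable_monotone_lt_comp {h l : ℕ → ℕ} (hhc : Computable h)
    (hhu : ∀ m, ∃ n, m ≤ h n) (hlc : Computable l) (hlm : Monotone l) :
    ∃ F : ℕ → ℕ, Computable F ∧ Monotone F ∧ ∀ m, l m < h (F m) := by
  have hex : ∀ m, ∃ k, l m < h k := fun m => (hhu (l m + 1)).imp fun _ => Nat.lt_of_succ_le
  have hpred : ComputablePred fun p : ℕ × ℕ => l p.1 < h p.2 :=
    ⟨inferInstance,
      Primrec.nat_lt.decide.to_comp.comp (hlc.comp .fst) (hhc.comp .snd)⟩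
  refine ⟨fun m => Nat.find (hex m), Computable.find hpred hex, fun a b hab => ?_,
    fun m => Nat.find_spec (hex m)⟩
  exact Nat.find_min' (hex a) ((hlm hab).trans_lt (Nat.find_spec (hex b)))

theorem le_iterate_sub_of_succ_le {α : Type*} [Preorder α] {F : α → α} {g : ℕ → α}
    (hF : Monotone F) {N : ℕ} (hstep : ∀ n ≥ N, g (n + 1) ≤ F (g n)) {n : ℕ}
    (hn : N ≤ n) :
    g n ≤ F^[n - N] (g N) := by
  obtain ⟨k, rfl⟩ := Nat.exists_eq_add_of_le hn
  rw [Nat.add_sub_cancel_left]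
  refine hF.seq_le_seq (x := fun k => g (N + k)) (y := fun k => F^[k] (g N)) k le_rfl
    (fun i _ => hstep (N + i) (Nat.le_add_right N i)) fun i _ => ?_
  rw [Function.iterate_succ_apply']

theorem exists_computable_eventually_le_of_succ_le {F g : ℕ → ℕ} (hFc : Computable F)
    (hFm : Monotone F) (hstep : ∀ᶠ n in atTop, g (n + 1) ≤ F (g n)) :
    ∃ f : ℕ → ℕ, Computable f ∧ ∀ᶠ n in atTop, g n ≤ f n := by
  obtain ⟨N, hN⟩ := eventually_atTop.1 hstep
  refine ⟨fun n => F^[n - N] (g N), ?_,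
    eventually_atTop.2 ⟨N, fun _ => le_iterate_sub_of_succ_le hFm hN⟩⟩
  exact Computable.nat_iterate (Primrec.nat_sub.to_comp.comp .id (.const N)) (.const (g N))
    (hFc.comp .snd).to₂

theorem stmt15_general (g h l : ℕ → ℕ)
    (hnd : ∀ f : ℕ → ℕ, Computable f → ∃ᶠ n in atTop, f n < g n)
    (hh : ComputableOrder h) (hl : ComputableOrder l) :
    ∃ᶠ n in atTop, l (g n) < h (g (n + 1)) := by
  obtain ⟨hhc, hhm, hhu⟩ := hh
  obtain ⟨F, hFc, hFm, hlF⟩ := exists_computable_monotone_lt_comp hhc hhu hl.1 hl.2.1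
  by_contra hcon
  have hstep : ∀ᶠ n in atTop, g (n + 1) ≤ F (g n) :=
    (not_frequently.1 hcon).mono fun n hn => (hhm.reflect_lt ((not_lt.1 hn).trans_lt (hlF _))).le
  obtain ⟨f, hfc, hgf⟩ := exists_computable_eventually_le_of_succ_le hFc hFm hstep
  obtain ⟨n, hlt, hle⟩ := ((hnd f hfc).and_eventually hgf).exists
  exact hle.not_gt hlt

theorem stmt15 (g h l : ℕ → ℕ) (hg : StrictMono g)
    (hnd : ∀ f : ℕ → ℕ, Computable f → ∃ᶠ n in atTop, f n < g n)
    (hh : ComputableOrder h) (hl : ComputableOrder l) :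
    ∃ᶠ n in atTop, l (g n) < h (g (n + 1)) :=
  stmt15_general g h l hnd hh hl
end
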